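/- arXiv:2304.05261 — 3 statements merged into one kernel-verified Lean document; each statement's English description precedes it below -/
import Mathlib

section
/- Let Ψ̄_n = 1 - Ψ_n denote the survival function of the chi-squared distribution with n degrees of freedom, and fix n, h > 0. Then the function g(u) = Ψ̄_{n+h}(Ψ̄_n^{-1}(u)) is concave on (0,1). -/
/-- Chi-squared density with `n > 0` degrees of freedom. -/
noncomputable def chiPDF (n y : ℝ) : ℝ :=
  if 0 < y then Real.exp (-y / 2) * y ^ (n / 2 - 1) / (2 ^ (n / 2) * Real.Gamma (n / 2)) else 0

/-- Chi-squared survival function `Ψ̄_n`. -/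
noncomputable def chiSurv (n x : ℝ) : ℝ := ∫ t in Set.Ioi x, chiPDF n t

/-! Write `f_n` for the chi-squared density. For `u < v` the secant slope of
`g = Ψ̄_{n+h} ∘ q` on `[u, v]` is `∫ f_{n+h} / ∫ f_n` over `(q v, q u]`, an average of the
likelihood ratio `f_{n+h} / f_n`, which is a positive multiple of `t ^ (h / 2)` and hence
increasing. As `q` is decreasing, the slope on an interval is at least the ratio at its right-hand
quantile and the slope on the adjacent interval to its right is at most that value. -/

open MeasureTheory Real Set

section MonotoneLikelihoodRatio

variable {f g w : ℝ → ℝ}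

lemma integral_Ioi_sub_Ioi_eq_integral_Ioc {a b : ℝ} (hf : IntegrableOn f (Ioi a))
    (hab : a ≤ b) :
    (∫ t in Ioi a, f t) - ∫ t in Ioi b, f t = ∫ t in Ioc a b, f t := by
  rw [intervalIntegral.integral_Ioi_sub_Ioi hf hab, intervalIntegral.integral_of_le hab]

lemma antitone_integral_Ioi (hf : Integrable f) (hf0 : 0 ≤ f) :
    Antitone fun a => ∫ t in Ioi a, f t := fun _ _ hab =>
  setIntegral_mono_set hf.integrableOn (ae_of_all _ fun t => hf0 t)
    (Ioi_subset_Ioi hab).eventuallyLE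

lemma mul_integral_Ioc_le_integral_Ioc (hw : Monotone w) (hf0 : 0 ≤ f) (hf : Integrable f)
    (hg : Integrable g) (hgw : ∀ t, g t = w t * f t) (a b : ℝ) :
    w a * ∫ t in Ioc a b, f t ≤ ∫ t in Ioc a b, g t := by
  rw [← integral_const_mul]
  refine setIntegral_mono_on (hf.integrableOn.const_mul _) hg.integrableOn measurableSet_Ioc
    fun t ht => ?_
  rw [hgw]
  exact mul_le_mul_of_nonneg_right (hw ht.1.le) (hf0 t)

lemma integral_Ioc_le_mul_integral_Ioc (hw : Monotone w) (hf0 : 0 ≤ f) (hf : Integrable f)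
    (hg : Integrable g) (hgw : ∀ t, g t = w t * f t) (a b : ℝ) :
    ∫ t in Ioc a b, g t ≤ w b * ∫ t in Ioc a b, f t := by
  rw [← integral_const_mul]
  refine setIntegral_mono_on hg.integrableOn (hf.integrableOn.const_mul _) measurableSet_Ioc
    fun t ht => ?_
  rw [hgw]
  exact mul_le_mul_of_nonneg_right (hw ht.2) (hf0 t)

theorem concaveOn_integral_Ioi_comp_of_monotone_ratio {q : ℝ → ℝ} {s : Set ℝ}
    (hs : Convex ℝ s) (hw : Monotone w) (hf0 : 0 ≤ f) (hf : Integrable f) (hg : Integrable g)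
    (hgw : ∀ t, g t = w t * f t) (hq : ∀ u ∈ s, ∫ t in Ioi (q u), f t = u) :
    ConcaveOn ℝ s fun u => ∫ t in Ioi (q u), g t := by
  have hq_anti : ∀ u ∈ s, ∀ v ∈ s, u < v → q v ≤ q u := fun u hu v hv huv => by
    by_contra! h
    have : ∫ t in Ioi (q v), f t ≤ ∫ t in Ioi (q u), f t := antitone_integral_Ioi hf hf0 h.le
    rw [hq u hu, hq v hv] at this
    linarith
  refine concaveOn_of_slope_anti_adjacent hs fun {x y z} hx hz hxy hyz => ?_
  have hy : y ∈ s := hs.ordConnected.out hx hz ⟨hxy.le, hyz.le⟩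
  have hqyx := hq_anti x hx y hy hxy
  have hqzy := hq_anti y hy z hz hyz
  have hyx : y - x = ∫ t in Ioc (q y) (q x), f t := by
    rw [← integral_Ioi_sub_Ioi_eq_integral_Ioc hf.integrableOn hqyx, hq x hx, hq y hy]
  have hzy : z - y = ∫ t in Ioc (q z) (q y), f t := by
    rw [← integral_Ioi_sub_Ioi_eq_integral_Ioc hf.integrableOn hqzy, hq y hy, hq z hz]
  calc ((∫ t in Ioi (q z), g t) - ∫ t in Ioi (q y), g t) / (z - y)
      ≤ w (q y) := by
        rw [div_le_iff₀ (sub_pos.2 hyz),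
          integral_Ioi_sub_Ioi_eq_integral_Ioc hg.integrableOn hqzy, hzy]
        exact integral_Ioc_le_mul_integral_Ioc hw hf0 hf hg hgw _ _
    _ ≤ ((∫ t in Ioi (q y), g t) - ∫ t in Ioi (q x), g t) / (y - x) := by
        rw [le_div_iff₀ (sub_pos.2 hxy),
          integral_Ioi_sub_Ioi_eq_integral_Ioc hg.integrableOn hqyx, hyx]
        exact mul_integral_Ioc_le_integral_Ioc hw hf0 hf hg hgw _ _

end MonotoneLikelihoodRatio

lemma chiPDF_nonneg {n : ℝ} (hn : 0 < n) : 0 ≤ chiPDF n := fun y => by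
  have := Gamma_pos_of_pos (half_pos hn)
  unfold chiPDF
  split_ifs <;> positivity

lemma integrable_chiPDF {n : ℝ} (hn : 0 < n) : Integrable (chiPDF n) := by
  have hIoi : IntegrableOn (chiPDF n) (Ioi 0) := by
    refine IntegrableOn.congr_fun ((integrableOn_rpow_mul_exp_neg_mul_rpow (s := n / 2 - 1)
      (by linarith) one_pos one_half_pos).div_const (2 ^ (n / 2) * Gamma (n / 2)))
      (fun y hy => ?_) measurableSet_Ioi
    simp only [chiPDF, if_pos (mem_Ioi.mp hy), rpow_one]
    ring_nf
  refine (integrableOn_iff_integrable_of_support_subset fun y hy => ?_).mp hIoi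
  by_contra hy0
  exact hy (if_neg hy0)

lemma exists_monotone_chiPDF_ratio {n h : ℝ} (hn : 0 < n) (hh : 0 < h) :
    ∃ w : ℝ → ℝ, Monotone w ∧ ∀ y, chiPDF (n + h) y = w y * chiPDF n y := by
  have hC : 0 < 2 ^ (n / 2) * Gamma (n / 2) / (2 ^ ((n + h) / 2) * Gamma ((n + h) / 2)) := by
    have := Gamma_pos_of_pos (half_pos hn)
    have := Gamma_pos_of_pos (half_pos (add_pos hn hh))
    positivity
  -- `max y 0` because `Real.rpow` is not monotone on negative bases, where both densities vanish.
  refine ⟨fun y => 2 ^ (n / 2) * Gamma (n / 2) / (2 ^ ((n + h) / 2) * Gamma ((n + h) / 2)) *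
    max y 0 ^ (h / 2), fun a b hab => ?_, fun y => ?_⟩
  · exact mul_le_mul_of_nonneg_left
      (rpow_le_rpow (le_max_right _ _) (max_le_max_right 0 hab) (by positivity)) hC.le
  · simp only [chiPDF]
    split_ifs with hy
    · rw [max_eq_left hy.le, show (n + h) / 2 - 1 = h / 2 + (n / 2 - 1) by ring, rpow_add hy]
      field_simp
    · rw [mul_zero]

/-- For `n, h > 0`, the function `g(u) = Ψ̄_{n+h}(Ψ̄_n⁻¹(u))` is concave on `(0,1)`,
where `q` is the inverse of `Ψ̄_n` on `(0,1)`. -/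
theorem concave_chiSurv_comp_inv (n h : ℝ) (hn : 0 < n) (hh : 0 < h)
    (q : ℝ → ℝ) (hq : ∀ u ∈ Set.Ioo (0 : ℝ) 1, chiSurv n (q u) = u) :
    ConcaveOn ℝ (Set.Ioo (0 : ℝ) 1) (fun u => chiSurv (n + h) (q u)) := by
  obtain ⟨w, hw, hratio⟩ := exists_monotone_chiPDF_ratio hn hh
  exact concaveOn_integral_Ioi_comp_of_monotone_ratio (convex_Ioo 0 1) hw (chiPDF_nonneg hn)
    (integrable_chiPDF hn) (integrable_chiPDF (add_pos hn hh)) hratio hq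
end

section
/- (Lemma 3 of the paper) For any fixed n > 0 and λ ≥ 0, the function u ↦ Pr[χ'²_n(λ) ≥ Ψ̄_n^{-1}(u)] / u is non-increasing in u ∈ (0,1). -/
/-- Non-central chi-squared density: Poisson(lam/2) mixture of central densities. -/
noncomputable def ncChiPDF (n lam y : ℝ) : ℝ :=
  ∑' j : ℕ, Real.exp (-lam / 2) * (lam / 2) ^ j / (Nat.factorial j) * chiPDF (n + 2 * j) y

/-- Non-central chi-squared survival function. -/
noncomputable def ncChiSurv (n lam x : ℝ) : ℝ := ∫ t in Set.Ioi x, ncChiPDF n lam t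

/-!
Writing `x = Ψ̄_n⁻¹(u)`, which decreases as `u` increases, it suffices that
`x ↦ Pr[χ'²_n(λ) > x] / Ψ̄_n(x)` is nondecreasing on `(0, ∞)`. The numerator is the Poisson
mixture `∑ⱼ e^{-λ/2} (λ/2)ʲ / j! · Ψ̄_{n+2j}(x)`, so it is enough that each `Ψ̄_{n+2j} / Ψ̄_n` is
nondecreasing. This follows from the monotone likelihood ratio of the chi-squared family: the ratio
of the densities of degrees `n + 2j` and `n` is a constant multiple of `xʲ`.
-/

open MeasureTheory Set Real ProbabilityTheory

lemma chiPDF_nonneg_s4 {m : ℝ} (hm : 0 < m) (y : ℝ) : 0 ≤ chiPDF m y := by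
  have := Gamma_pos_of_pos (half_pos hm)
  unfold chiPDF
  split_ifs <;> positivity

lemma chiPDF_pos {m y : ℝ} (hm : 0 < m) (hy : 0 < y) : 0 < chiPDF m y := by
  have := Gamma_pos_of_pos (half_pos hm)
  rw [chiPDF, if_pos hy]
  positivity

lemma chiPDF_ae_eq_gammaPDFReal (m : ℝ) : chiPDF m =ᵐ[volume] gammaPDFReal (m / 2) (1 / 2) := by
  filter_upwards [Measure.ae_ne volume 0] with y hy
  rcases hy.lt_or_gt with hy | hy
  · simp [chiPDF, gammaPDFReal, hy.not_gt, hy.not_ge]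
  · rw [chiPDF, gammaPDFReal, if_pos hy, if_pos hy.le, div_rpow zero_le_one zero_le_two, one_rpow]
    ring_nf

lemma integral_chiPDF {m : ℝ} (hm : 0 < m) : ∫ y, chiPDF m y = 1 := by
  have hm' : 0 < m / 2 := half_pos hm
  rw [integral_congr_ae (chiPDF_ae_eq_gammaPDFReal m),
    integral_eq_lintegral_of_nonneg_ae (.of_forall (gammaPDFReal_nonneg hm' one_half_pos))
      (measurable_gammaPDFReal _ _).aestronglyMeasurable]
  exact (congrArg ENNReal.toReal (lintegral_gammaPDF_eq_one hm' one_half_pos)).trans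
    ENNReal.toReal_one

lemma integrable_chiPDF_s4 {m : ℝ} (hm : 0 < m) : Integrable (chiPDF m) :=
  .of_integral_ne_zero (by simp [integral_chiPDF hm])

lemma chiSurv_of_nonpos {m x : ℝ} (hm : 0 < m) (hx : x ≤ 0) : chiSurv m x = 1 := by
  rw [chiSurv, setIntegral_eq_integral_of_forall_compl_eq_zero, integral_chiPDF hm]
  intro y hy
  rw [chiPDF, if_neg (fun h => hy (hx.trans_lt h))]

lemma chiSurv_nonneg {m : ℝ} (hm : 0 < m) (x : ℝ) : 0 ≤ chiSurv m x :=
  setIntegral_nonneg measurableSet_Ioi fun y _ => chiPDF_nonneg_s4 hm y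

lemma chiSurv_le_one {m : ℝ} (hm : 0 < m) (x : ℝ) : chiSurv m x ≤ 1 :=
  (integral_chiPDF hm).le.trans' <|
    setIntegral_le_integral (integrable_chiPDF_s4 hm) (.of_forall (chiPDF_nonneg_s4 hm))

lemma chiSurv_antitone {m : ℝ} (hm : 0 < m) : Antitone (chiSurv m) := fun _ _ hab =>
  setIntegral_mono_set (integrable_chiPDF_s4 hm).integrableOn (.of_forall (chiPDF_nonneg_s4 hm))
    (Ioi_subset_Ioi hab).eventuallyLE

lemma exists_chiPDF_eq_mul_rpow {m₁ m₂ : ℝ} (hm₁ : 0 < m₁) (hm₂ : 0 < m₂) :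
    ∃ K > 0, ∀ y > 0, chiPDF m₂ y = K * y ^ ((m₂ - m₁) / 2) * chiPDF m₁ y := by
  have := Gamma_pos_of_pos (half_pos hm₁)
  have := Gamma_pos_of_pos (half_pos hm₂)
  refine ⟨2 ^ (m₁ / 2) * Gamma (m₁ / 2) / (2 ^ (m₂ / 2) * Gamma (m₂ / 2)), by positivity,
    fun y hy => ?_⟩
  have hsplit : y ^ (m₂ / 2 - 1) = y ^ ((m₂ - m₁) / 2) * y ^ (m₁ / 2 - 1) := by
    rw [← rpow_add hy]; ring_nf
  rw [chiPDF, chiPDF, if_pos hy, if_pos hy, hsplit]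
  field_simp

lemma chiPDF_mul_le_mul {m₁ m₂ s t : ℝ} (hm₁ : 0 < m₁) (hm : m₁ ≤ m₂) (hs : 0 < s)
    (hst : s ≤ t) : chiPDF m₂ s * chiPDF m₁ t ≤ chiPDF m₁ s * chiPDF m₂ t := by
  obtain ⟨K, hK, hratio⟩ := exists_chiPDF_eq_mul_rpow hm₁ (hm₁.trans_le hm)
  have hpow : s ^ ((m₂ - m₁) / 2) ≤ t ^ ((m₂ - m₁) / 2) :=
    rpow_le_rpow hs.le hst (by linarith)
  have hprod : 0 ≤ K * chiPDF m₁ s * chiPDF m₁ t :=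
    mul_nonneg (mul_nonneg hK.le (chiPDF_nonneg_s4 hm₁ s)) (chiPDF_nonneg_s4 hm₁ t)
  rw [hratio s hs, hratio t (hs.trans_le hst)]
  nlinarith [mul_le_mul_of_nonneg_left hpow hprod]

/-- If `g / f` is nondecreasing on `(a, ∞)`, so is `x ↦ (∫_{(x,∞)} g) / (∫_{(x,∞)} f)`. -/
lemma setIntegral_Ioi_mul_setIntegral_Ioi_le {f g : ℝ → ℝ} {a b : ℝ} (hab : a ≤ b)
    (hf : IntegrableOn f (Ioi a)) (hg : IntegrableOn g (Ioi a)) (hf₀ : ∀ t, a < t → 0 ≤ f t)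
    (hfb : 0 < f b) (hratio : ∀ s t, a < s → s ≤ t → g s * f t ≤ f s * g t) :
    (∫ t in Ioi a, g t) * ∫ t in Ioi b, f t ≤ (∫ t in Ioi b, g t) * ∫ t in Ioi a, f t := by
  rcases hab.eq_or_lt with rfl | hab
  · rw [mul_comm]
  have hsplit : ∀ h : ℝ → ℝ, IntegrableOn h (Ioi a) →
      ∫ t in Ioi a, h t = (∫ t in Ioc a b, h t) + ∫ t in Ioi b, h t := fun h hh => by
    rw [← Ioc_union_Ioi_eq_Ioi hab.le, setIntegral_union (Ioc_disjoint_Ioi le_rfl)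
      measurableSet_Ioi (hh.mono_set Ioc_subset_Ioi_self) (hh.mono_set (Ioi_subset_Ioi hab.le))]
  -- compare both pieces with the pivot `g b / f b`
  have hnear : f b * ∫ t in Ioc a b, g t ≤ g b * ∫ t in Ioc a b, f t := by
    rw [← integral_const_mul, ← integral_const_mul]
    refine setIntegral_mono_on ((hg.mono_set Ioc_subset_Ioi_self).const_mul _)
      ((hf.mono_set Ioc_subset_Ioi_self).const_mul _) measurableSet_Ioc fun s hs => ?_
    linarith [hratio s b hs.1 hs.2]
  have hfar : g b * ∫ t in Ioi b, f t ≤ f b * ∫ t in Ioi b, g t := by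
    rw [← integral_const_mul, ← integral_const_mul]
    refine setIntegral_mono_on ((hf.mono_set (Ioi_subset_Ioi hab.le)).const_mul _)
      ((hg.mono_set (Ioi_subset_Ioi hab.le)).const_mul _) measurableSet_Ioi fun t ht => ?_
    linarith [hratio b t hab ht.le]
  have hnear₀ : 0 ≤ ∫ t in Ioc a b, f t :=
    setIntegral_nonneg measurableSet_Ioc fun t ht => hf₀ t ht.1
  have hfar₀ : 0 ≤ ∫ t in Ioi b, f t :=
    setIntegral_nonneg measurableSet_Ioi fun t ht => hf₀ t (hab.trans ht)
  rw [hsplit f hf, hsplit g hg]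
  nlinarith [mul_le_mul_of_nonneg_right hnear hfar₀, mul_le_mul_of_nonneg_left hfar hnear₀]

lemma chiSurv_mul_le_mul {m₁ m₂ a b : ℝ} (hm₁ : 0 < m₁) (hm : m₁ ≤ m₂) (ha : 0 < a)
    (hab : a ≤ b) : chiSurv m₂ a * chiSurv m₁ b ≤ chiSurv m₂ b * chiSurv m₁ a :=
  setIntegral_Ioi_mul_setIntegral_Ioi_le hab (integrable_chiPDF_s4 hm₁).integrableOn
    (integrable_chiPDF_s4 (hm₁.trans_le hm)).integrableOn (fun t _ => chiPDF_nonneg_s4 hm₁ t)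
    (chiPDF_pos hm₁ (ha.trans_le hab))
    fun _ _ hs hst => chiPDF_mul_le_mul hm₁ hm (ha.trans hs) hst

lemma setIntegral_tsum_mul {ι : Type*} [Countable ι] {w : ι → ℝ} {f : ι → ℝ → ℝ} (s : Set ℝ)
    (hw₀ : ∀ i, 0 ≤ w i) (hw : Summable w) (hf : ∀ i, Integrable (f i))
    (hf₀ : ∀ i t, 0 ≤ f i t) (hf₁ : ∀ i, ∫ t, f i t ≤ 1) :
    ∫ t in s, ∑' i, w i * f i t = ∑' i, w i * ∫ t in s, f i t := by
  have hbound : ∀ i, ∫ t in s, ‖w i * f i t‖ ≤ w i := fun i => by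
    simp_rw [norm_mul, Real.norm_of_nonneg (hw₀ i), Real.norm_of_nonneg (hf₀ i _),
      integral_const_mul]
    exact mul_le_of_le_one_right (hw₀ i)
      ((setIntegral_le_integral (hf i) (.of_forall (hf₀ i))).trans (hf₁ i))
  rw [← integral_tsum_of_summable_integral_norm (fun i => ((hf i).const_mul (w i)).restrict)
    (hw.of_nonneg_of_le (fun i => integral_nonneg fun _ => norm_nonneg _) hbound)]
  simp_rw [integral_const_mul]

lemma summable_mul_pow_div_factorial (c x : ℝ) : Summable fun j : ℕ => c * x ^ j / j.factorial :=
  ((summable_pow_div_factorial x).mul_left c).congr fun _ => (mul_div_assoc ..).symm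

lemma ncChiSurv_eq_tsum {n lam : ℝ} (hn : 0 < n) (hlam : 0 ≤ lam) (x : ℝ) :
    ncChiSurv n lam x =
      ∑' j : ℕ, exp (-lam / 2) * (lam / 2) ^ j / j.factorial * chiSurv (n + 2 * j) x :=
  setIntegral_tsum_mul _ (fun _ => by positivity) (summable_mul_pow_div_factorial _ _)
    (fun _ => integrable_chiPDF_s4 (by positivity)) (fun _ => chiPDF_nonneg_s4 (by positivity))
    fun _ => (integral_chiPDF (by positivity)).le

lemma ncChiSurv_mul_le_mul {n lam a b : ℝ} (hn : 0 < n) (hlam : 0 ≤ lam) (ha : 0 < a)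
    (hab : a ≤ b) : ncChiSurv n lam a * chiSurv n b ≤ ncChiSurv n lam b * chiSurv n a := by
  have hsummable : ∀ x, Summable fun j : ℕ =>
      exp (-lam / 2) * (lam / 2) ^ j / j.factorial * chiSurv (n + 2 * j) x := fun x =>
    (summable_mul_pow_div_factorial _ _).of_nonneg_of_le
      (fun _ => mul_nonneg (by positivity) (chiSurv_nonneg (by positivity) x))
      fun _ => mul_le_of_le_one_right (by positivity) (chiSurv_le_one (by positivity) x)
  rw [ncChiSurv_eq_tsum hn hlam, ncChiSurv_eq_tsum hn hlam, ← tsum_mul_right, ← tsum_mul_right]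
  refine ((hsummable a).mul_right _).tsum_le_tsum (fun j => ?_) ((hsummable b).mul_right _)
  rw [mul_assoc, mul_assoc]
  exact mul_le_mul_of_nonneg_left
    (chiSurv_mul_le_mul hn (by linarith [j.cast_nonneg (α := ℝ)]) ha hab) (by positivity)

/-- Lemma 3: for fixed `n > 0` and `λ ≥ 0`, `u ↦ Pr[χ'²_n(λ) ≥ Ψ̄_n⁻¹(u)] / u` is
non-increasing on `(0,1)`, where `q` is the inverse of `Ψ̄_n` on `(0,1)`. -/
theorem ncChiSurv_div_antitone (n lam : ℝ) (hn : 0 < n) (hlam : 0 ≤ lam)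
    (q : ℝ → ℝ) (hq : ∀ u ∈ Set.Ioo (0 : ℝ) 1, chiSurv n (q u) = u) :
    AntitoneOn (fun u => ncChiSurv n lam (q u) / u) (Set.Ioo (0 : ℝ) 1) := by
  intro u₁ hu₁ u₂ hu₂ hu
  have hq_pos : 0 < q u₂ := lt_of_not_ge fun h => hu₂.2.ne <| by
    rw [← hq u₂ hu₂, chiSurv_of_nonpos hn h]
  have hq_anti : q u₂ ≤ q u₁ := by
    rcases hu.eq_or_lt with rfl | hu
    · rfl
    refine le_of_not_gt fun h => hu.not_ge ?_
    simpa only [hq u₁ hu₁, hq u₂ hu₂] using chiSurv_antitone hn h.le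
  dsimp only
  rw [div_le_div_iff₀ hu₂.1 hu₁.1]
  simpa only [hq u₁ hu₁, hq u₂ hu₂] using ncChiSurv_mul_le_mul hn hlam hq_pos hq_anti
end

section
/- (FDR identity for step-up procedures) Let P_1, ..., P_d be p-values, I_0 ⊆ {1,...,d} the set of true nulls, and consider the step-up procedure with constants 0 < α_1 ≤ ... ≤ α_d < 1. Then FDR = Σ_{i∈I_0} E[ 1(P_i ≤ α_{R_{-i}+1}) / (R_{-i}+1) ], where R_{-i} = max{ j ∈ {1,...,d-1} : P_{(j)∖{i}} ≤ α_{j+1} } (taken as 0 if no such j exists) is the step-up rejection count computed from the d-1 p-values excluding P_i, shifted critical values α_2, ..., α_d. -/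
open MeasureTheory

/-- Step-up rejection count: `R = max{r ≤ d : #{i : p i ≤ α r} ≥ r}` (0 if only `r = 0` works),
an equivalent description of `max{i : P_(i) ≤ α_i}` for nondecreasing constants. -/
noncomputable def stepUpR {d : ℕ} (α : ℕ → ℝ) (p : Fin d → ℝ) : ℕ :=
  sSup {r | r ≤ d ∧ r ≤ (Finset.univ.filter fun i => p i ≤ α r).card}

/-- False discovery proportion of the step-up procedure with constants `α` and
true-null index set `I0`. -/
noncomputable def stepUpFDP {d : ℕ} (α : ℕ → ℝ) (I0 : Finset (Fin d)) (p : Fin d → ℝ) : ℝ :=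
  if stepUpR α p = 0 then 0
  else ((I0.filter fun i => p i ≤ α (stepUpR α p)).card : ℝ) / (stepUpR α p)

/-- Step-up rejection count computed from the `d-1` p-values excluding index `i`, with the
shifted critical constants `α 2, …, α d`. -/
noncomputable def stepUpRExcl {d : ℕ} (α : ℕ → ℝ) (p : Fin d → ℝ) (i : Fin d) : ℕ :=
  sSup {r | r ≤ d - 1 ∧ r ≤ ((Finset.univ.erase i).filter fun j => p j ≤ α (r + 1)).card}

/-!
Pointwise in `p`, the FDP is `Σ_{i ∈ I0} 1(H_i rejected) / R`. Removing `P_i` from a sample in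
which `H_i` is rejected lowers the step-up count by exactly one, `R = R_{-i} + 1`, and `H_i` is
rejected iff `P_i ≤ α_{R_{-i}+1}`; so the identity already holds before taking expectations, and
integrating the finite sum of bounded measurable terms gives it for the FDR.
-/

theorem Nat.sSup_setOf_le_and_eq_findGreatest (n : ℕ) (P : ℕ → Prop) [DecidablePred P]
    (h0 : P 0) : sSup {r | r ≤ n ∧ P r} = Nat.findGreatest P n := by
  have hbdd : BddAbove {r | r ≤ n ∧ P r} := ⟨n, fun r hr => hr.1⟩
  have hmem : sSup {r | r ≤ n ∧ P r} ∈ {r | r ≤ n ∧ P r} := Nat.sSup_mem ⟨0, n.zero_le, h0⟩ hbdd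
  exact le_antisymm (Nat.le_findGreatest hmem.1 hmem.2)
    (le_csSup hbdd ⟨Nat.findGreatest_le n, Nat.findGreatest_spec n.zero_le h0⟩)

theorem Finset.card_filter_erase_add_one {ι : Type*} [DecidableEq ι] {s : Finset ι}
    {q : ι → Prop} [DecidablePred q] {i : ι} (hs : i ∈ s) (hq : q i) :
    ((s.erase i).filter q).card + 1 = (s.filter q).card := by
  rw [Finset.filter_erase, Finset.card_erase_add_one (Finset.mem_filter.2 ⟨hs, hq⟩)]

section StepUp

variable {d : ℕ} (α : ℕ → ℝ) (p : Fin d → ℝ) (i : Fin d)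

theorem stepUpR_eq_findGreatest :
    stepUpR α p = Nat.findGreatest (fun r => r ≤ (Finset.univ.filter fun j => p j ≤ α r).card) d :=
  Nat.sSup_setOf_le_and_eq_findGreatest _ _ (Nat.zero_le _)

theorem stepUpRExcl_eq_findGreatest :
    stepUpRExcl α p i = Nat.findGreatest
      (fun r => r ≤ ((Finset.univ.erase i).filter fun j => p j ≤ α (r + 1)).card) (d - 1) :=
  Nat.sSup_setOf_le_and_eq_findGreatest _ _ (Nat.zero_le _)

theorem stepUpR_le : stepUpR α p ≤ d := by
  rw [stepUpR_eq_findGreatest]; exact Nat.findGreatest_le d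

theorem stepUpRExcl_le : stepUpRExcl α p i ≤ d - 1 := by
  rw [stepUpRExcl_eq_findGreatest]; exact Nat.findGreatest_le _

theorem stepUpR_le_card :
    stepUpR α p ≤ (Finset.univ.filter fun j => p j ≤ α (stepUpR α p)).card := by
  rw [stepUpR_eq_findGreatest]
  exact Nat.findGreatest_spec (P := fun r => r ≤ (Finset.univ.filter fun j => p j ≤ α r).card)
    d.zero_le (Nat.zero_le _)

theorem stepUpRExcl_le_card : stepUpRExcl α p i ≤
    ((Finset.univ.erase i).filter fun j => p j ≤ α (stepUpRExcl α p i + 1)).card := by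
  rw [stepUpRExcl_eq_findGreatest]
  exact Nat.findGreatest_spec
    (P := fun r => r ≤ ((Finset.univ.erase i).filter fun j => p j ≤ α (r + 1)).card)
    (d - 1).zero_le (Nat.zero_le _)

theorem le_stepUpR {r : ℕ} (hr : r ≤ d) (h : r ≤ (Finset.univ.filter fun j => p j ≤ α r).card) :
    r ≤ stepUpR α p := by
  rw [stepUpR_eq_findGreatest]; exact Nat.le_findGreatest hr h

theorem le_stepUpRExcl {r : ℕ} (hr : r ≤ d - 1)
    (h : r ≤ ((Finset.univ.erase i).filter fun j => p j ≤ α (r + 1)).card) :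
    r ≤ stepUpRExcl α p i := by
  rw [stepUpRExcl_eq_findGreatest]; exact Nat.le_findGreatest hr h

theorem stepUpRExcl_add_one_le_stepUpR (h : p i ≤ α (stepUpRExcl α p i + 1)) :
    stepUpRExcl α p i + 1 ≤ stepUpR α p := by
  refine le_stepUpR α p (by have := stepUpRExcl_le α p i; have := i.pos; omega) ?_
  rw [← Finset.card_filter_erase_add_one (Finset.mem_univ i) h]
  exact Nat.add_le_add_right (stepUpRExcl_le_card α p i) 1

theorem stepUpR_le_stepUpRExcl_add_one (hR : 0 < stepUpR α p) (h : p i ≤ α (stepUpR α p)) :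
    stepUpR α p ≤ stepUpRExcl α p i + 1 := by
  have hle : stepUpR α p - 1 ≤ stepUpRExcl α p i := by
    refine le_stepUpRExcl α p i (by have := stepUpR_le α p; omega) ?_
    rw [Nat.sub_add_cancel hR]
    have := Finset.card_filter_erase_add_one (q := fun j => p j ≤ α (stepUpR α p))
      (Finset.mem_univ i) h
    have := stepUpR_le_card α p
    omega
  omega

variable {α}

theorem stepUpR_eq_stepUpRExcl_add_one (hα : MonotoneOn α (Set.Icc 1 d))
    (hR : 0 < stepUpR α p) (h : p i ≤ α (stepUpR α p)) :
    stepUpR α p = stepUpRExcl α p i + 1 := by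
  have hle := stepUpR_le_stepUpRExcl_add_one α p i hR h
  refine le_antisymm hle (stepUpRExcl_add_one_le_stepUpR α p i (h.trans ?_))
  exact hα ⟨hR, stepUpR_le α p⟩
    ⟨Nat.le_add_left 1 _, by have := stepUpRExcl_le α p i; have := i.pos; omega⟩ hle

theorem le_α_stepUpRExcl_add_one_iff (hα : MonotoneOn α (Set.Icc 1 d)) :
    p i ≤ α (stepUpRExcl α p i + 1) ↔ 0 < stepUpR α p ∧ p i ≤ α (stepUpR α p) := by
  constructor
  · intro h
    have hle := stepUpRExcl_add_one_le_stepUpR α p i h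
    exact ⟨by omega, h.trans (hα ⟨Nat.le_add_left 1 _, hle.trans (stepUpR_le α p)⟩
      ⟨by omega, stepUpR_le α p⟩ hle)⟩
  · rintro ⟨hR, h⟩
    rwa [← stepUpR_eq_stepUpRExcl_add_one p i hα hR h]

theorem stepUpFDP_eq_sum (hα : MonotoneOn α (Set.Icc 1 d)) (I0 : Finset (Fin d)) :
    stepUpFDP α I0 p = ∑ i ∈ I0, if p i ≤ α (stepUpRExcl α p i + 1) then
      (1 : ℝ) / (stepUpRExcl α p i + 1) else 0 := by
  rcases (stepUpR α p).eq_zero_or_pos with hR | hR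
  · simp [stepUpFDP, hR, le_α_stepUpRExcl_add_one_iff p _ hα]
  · have hterm : ∀ i, (if p i ≤ α (stepUpRExcl α p i + 1) then
        (1 : ℝ) / (stepUpRExcl α p i + 1) else 0) =
        if p i ≤ α (stepUpR α p) then ((stepUpR α p : ℕ) : ℝ)⁻¹ else 0 := by
      intro i
      by_cases h : p i ≤ α (stepUpR α p)
      · rw [if_pos ((le_α_stepUpRExcl_add_one_iff p i hα).2 ⟨hR, h⟩), if_pos h,
          stepUpR_eq_stepUpRExcl_add_one p i hα hR h]
        push_cast
        exact one_div _
      · rw [if_neg (fun h' => h ((le_α_stepUpRExcl_add_one_iff p i hα).1 h').2), if_neg h]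
    rw [stepUpFDP, if_neg hR.ne', Finset.sum_congr rfl fun i _ => hterm i, Finset.sum_ite,
      Finset.sum_const, Finset.sum_const_zero, nsmul_eq_mul, add_zero, div_eq_mul_inv]

theorem measurable_card_filter_le {ι : Type*} [Fintype ι] (s : Finset ι) (c : ℝ) :
    Measurable fun x : ι → ℝ => (s.filter fun j => x j ≤ c).card := by
  simp only [Finset.card_filter]
  exact Finset.measurable_sum s fun j _ =>
    Measurable.ite (measurableSet_le (measurable_pi_apply j) measurable_const)
      measurable_const measurable_const

variable (α)

theorem measurable_stepUpRExcl : Measurable fun x : Fin d → ℝ => stepUpRExcl α x i := by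
  simp only [stepUpRExcl_eq_findGreatest]
  exact measurable_findGreatest fun r _ => measurable_card_filter_le _ _ measurableSet_Ici

theorem measurable_indicator_div_stepUpRExcl : Measurable fun x : Fin d → ℝ =>
    if x i ≤ α (stepUpRExcl α x i + 1) then (1 : ℝ) / (stepUpRExcl α x i + 1) else 0 := by
  have hsection : ∀ r : ℕ, Measurable fun x : Fin d → ℝ =>
      if x i ≤ α (r + 1) then (1 : ℝ) / (r + 1) else 0 := fun r =>
    Measurable.ite (measurableSet_le (measurable_pi_apply i) measurable_const)
      measurable_const measurable_const
  have hjoint := measurable_from_prod_countable_left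
    (f := fun xr : (Fin d → ℝ) × ℕ => if xr.1 i ≤ α (xr.2 + 1) then (1 : ℝ) / (xr.2 + 1) else 0)
    hsection
  exact hjoint.comp (measurable_id.prodMk (measurable_stepUpRExcl α i))

theorem norm_indicator_div_stepUpRExcl_le_one :
    ‖if p i ≤ α (stepUpRExcl α p i + 1) then (1 : ℝ) / (stepUpRExcl α p i + 1) else 0‖ ≤ 1 := by
  split_ifs
  · rw [Real.norm_of_nonneg (by positivity), div_le_one (by positivity)]
    linarith [(stepUpRExcl α p i).cast_nonneg (α := ℝ)]
  · simp

end StepUp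

theorem stepUp_FDR_identity_general {Ω : Type*} [MeasurableSpace Ω] (P : Measure Ω)
    [IsProbabilityMeasure P] {d : ℕ} (p : Ω → Fin d → ℝ) (hp : Measurable p)
    (I0 : Finset (Fin d)) (α : ℕ → ℝ)
    (hαmono : ∀ r s : ℕ, 1 ≤ r → r ≤ s → s ≤ d → α r ≤ α s) :
    ∫ ω, stepUpFDP α I0 (p ω) ∂P =
      ∑ i ∈ I0, ∫ ω,
        (if p ω i ≤ α (stepUpRExcl α (p ω) i + 1) then
          (1 : ℝ) / (stepUpRExcl α (p ω) i + 1) else 0) ∂P := by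
  have hα : MonotoneOn α (Set.Icc 1 d) := fun r hr s hs hrs => hαmono r s hr.1 hrs hs.2
  simp_rw [stepUpFDP_eq_sum _ hα]
  refine integral_finsetSum I0 fun i _ => Integrable.of_bound
    ((measurable_indicator_div_stepUpRExcl α i).comp hp).aestronglyMeasurable 1 ?_
  exact Filter.Eventually.of_forall fun ω => norm_indicator_div_stepUpRExcl_le_one α (p ω) i

/-- FDR identity for step-up procedures:
`FDR = Σ_{i∈I0} E[ 1(P_i ≤ α_{R_{-i}+1}) / (R_{-i}+1) ]`. -/
theorem stepUp_FDR_identity {Ω : Type*} [MeasurableSpace Ω] (P : Measure Ω)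
    [IsProbabilityMeasure P] {d : ℕ} (p : Ω → Fin d → ℝ) (hp : Measurable p)
    (I0 : Finset (Fin d)) (α : ℕ → ℝ)
    (hα0 : 0 < α 1) (hαd : α d < 1)
    (hαmono : ∀ r s : ℕ, 1 ≤ r → r ≤ s → s ≤ d → α r ≤ α s) :
    ∫ ω, stepUpFDP α I0 (p ω) ∂P =
      ∑ i ∈ I0, ∫ ω,
        (if p ω i ≤ α (stepUpRExcl α (p ω) i + 1) then
          (1 : ℝ) / (stepUpRExcl α (p ω) i + 1) else 0) ∂P :=
  stepUp_FDR_identity_general P p hp I0 α hαmono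
end
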